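/- Let F1(x) = ε/(1+exp(α1+β1 x)) and F2(x) = 1/(1+exp(α2+β2 x)) with β1 < β2 < 0. Then the ratio R(x) = F1'(x)/F2'(x) is not monotonic on ℝ: R attains a local maximum, i.e., there exist x1 < x2 < x3 with R(x1) < R(x2) and R(x2) > R(x3). -/

import Mathlib

/-!
Writing `ρ t = exp t / (1 + exp t) ^ 2` for the logistic density, `R x` is the positive constant
`ε β₁ / β₂` times `ρ (α₁ + β₁ x) / ρ (α₂ + β₂ x)`. Since `ρ t` is `exp (-|t|)` up to a factor
between `1/4` and `1`, this ratio is at most `4 exp (|α₁| + |α₂| - (|β₁| - |β₂|) |x|)`, and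
`|β₂| < |β₁|` makes it tend to `0` as `|x| → ∞`. A positive function vanishing at both ends of `ℝ`
is beaten by its value at `0` far out on either side.
-/

open Filter Real Topology

noncomputable def logisticDensity (t : ℝ) : ℝ := exp t / (1 + exp t) ^ 2

namespace logisticDensity

lemma pos (t : ℝ) : 0 < logisticDensity t := by
  unfold logisticDensity
  positivity

lemma le_exp_neg_abs (t : ℝ) : logisticDensity t ≤ exp (-|t|) := by
  unfold logisticDensity
  have he := exp_pos t
  rw [div_le_iff₀ (by positivity)]
  rcases le_total 0 t with ht | ht
  · have : exp t * exp (-t) = 1 := by rw [← exp_add, add_neg_cancel, exp_zero]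
    rw [abs_of_nonneg ht]
    nlinarith [exp_pos (-t)]
  · rw [abs_of_nonpos ht, neg_neg]
    exact le_mul_of_one_le_right he.le (by nlinarith)

lemma exp_neg_abs_div_four_le (t : ℝ) : exp (-|t|) / 4 ≤ logisticDensity t := by
  unfold logisticDensity
  have he := exp_pos t
  rw [div_le_div_iff₀ (by norm_num) (by positivity)]
  rcases le_total 0 t with ht | ht
  · have h1 : 1 ≤ exp t := one_le_exp ht
    have : exp t * exp (-t) = 1 := by rw [← exp_add, add_neg_cancel, exp_zero]
    rw [abs_of_nonneg ht]
    nlinarith [exp_pos (-t)]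
  · have h1 : exp t ≤ 1 := exp_le_one_iff.mpr ht
    rw [abs_of_nonpos ht, neg_neg]
    exact mul_le_mul_of_nonneg_left (by nlinarith) he.le

lemma div_le_four_mul_exp (α₁ α₂ β₁ β₂ x : ℝ) :
    logisticDensity (α₁ + β₁ * x) / logisticDensity (α₂ + β₂ * x) ≤
      4 * exp (|α₁| + |α₂| - (|β₁| - |β₂|) * |x|) := by
  set u₁ := α₁ + β₁ * x
  set u₂ := α₂ + β₂ * x
  have habs : |u₂| - |u₁| ≤ |α₁| + |α₂| - (|β₁| - |β₂|) * |x| := by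
    have h₁ : |β₁| * |x| ≤ |u₁| + |α₁| := by
      rw [← abs_mul]
      calc |β₁ * x| = |u₁ - α₁| := by simp [u₁]
        _ ≤ |u₁| + |α₁| := abs_sub _ _
    have h₂ : |u₂| ≤ |α₂| + |β₂| * |x| := by
      rw [← abs_mul]
      exact abs_add_le _ _
    linarith
  calc logisticDensity u₁ / logisticDensity u₂ ≤ exp (-|u₁|) / (exp (-|u₂|) / 4) :=
        div_le_div₀ (exp_pos _).le (le_exp_neg_abs u₁) (by positivity)
          (exp_neg_abs_div_four_le u₂)
    _ = 4 * exp (|u₂| - |u₁|) := by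
        rw [div_div_eq_mul_div, mul_comm, mul_div_assoc, ← exp_sub]
        ring_nf
    _ ≤ 4 * exp (|α₁| + |α₂| - (|β₁| - |β₂|) * |x|) := by gcongr

lemma tendsto_div_cocompact {β₁ β₂ : ℝ} (hβ : |β₂| < |β₁|) (α₁ α₂ : ℝ) :
    Tendsto (fun x => logisticDensity (α₁ + β₁ * x) / logisticDensity (α₂ + β₂ * x))
      (cocompact ℝ) (𝓝 0) := by
  have hexponent : Tendsto (fun x : ℝ => |α₁| + |α₂| - (|β₁| - |β₂|) * |x|)
      (cocompact ℝ) atBot :=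
    tendsto_atBot_add_const_left _ _ <| tendsto_neg_atTop_atBot.comp <|
      tendsto_norm_cocompact_atTop.const_mul_atTop (sub_pos.mpr hβ)
  have hbound := (tendsto_exp_atBot.comp hexponent).const_mul 4
  rw [mul_zero] at hbound
  exact squeeze_zero (fun x => (div_pos (pos _) (pos _)).le)
    (div_le_four_mul_exp α₁ α₂ β₁ β₂) hbound

end logisticDensity

lemma exists_lt_lt_of_tendsto_cocompact_zero {f : ℝ → ℝ} (hf : Tendsto f (cocompact ℝ) (𝓝 0))
    {x₀ : ℝ} (hx₀ : 0 < f x₀) : ∃ x₁ x₃, x₁ < x₀ ∧ x₀ < x₃ ∧ f x₁ < f x₀ ∧ f x₃ < f x₀ := by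
  have hsmall := hf.eventually (gt_mem_nhds hx₀)
  obtain ⟨x₁, hx₁, hfx₁⟩ :=
    ((eventually_lt_atBot x₀).and (hsmall.filter_mono atBot_le_cocompact)).exists
  obtain ⟨x₃, hx₃, hfx₃⟩ :=
    ((eventually_gt_atTop x₀).and (hsmall.filter_mono atTop_le_cocompact)).exists
  exact ⟨x₁, x₃, hx₁, hx₃, hfx₁, hfx₃⟩

/-- With F1, F2 scaled logistics and β1 < β2 < 0, the ratio
R(x) = F1'(x)/F2'(x) is not monotonic: it attains a local maximum, i.e. there exist
x1 < x2 < x3 with R(x1) < R(x2) and R(x3) < R(x2). -/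
theorem stmt_12 (ε α1 α2 β1 β2 : ℝ) (hε : 0 < ε) (h12 : β1 < β2) (h2 : β2 < 0)
    (R : ℝ → ℝ)
    (hR : ∀ x, R x =
      (-ε * β1 * Real.exp (α1 + β1 * x) / (1 + Real.exp (α1 + β1 * x)) ^ 2) /
      (-β2 * Real.exp (α2 + β2 * x) / (1 + Real.exp (α2 + β2 * x)) ^ 2)) :
    ∃ x1 x2 x3 : ℝ, x1 < x2 ∧ x2 < x3 ∧ R x1 < R x2 ∧ R x3 < R x2 := by
  have h1 : β1 < 0 := h12.trans h2
  have hK : 0 < ε * β1 / β2 := div_pos_of_neg_of_neg (mul_neg_of_pos_of_neg hε h1) h2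
  have hR_eq : R = fun x => ε * β1 / β2 *
      (logisticDensity (α1 + β1 * x) / logisticDensity (α2 + β2 * x)) := by
    funext x
    rw [hR x, logisticDensity, logisticDensity]
    ring
  have hβ : |β2| < |β1| := by
    rw [abs_of_neg h1, abs_of_neg h2]
    linarith
  have hlim : Tendsto R (cocompact ℝ) (𝓝 0) := by
    simpa [hR_eq] using (logisticDensity.tendsto_div_cocompact hβ α1 α2).const_mul (ε * β1 / β2)
  have hR0 : 0 < R 0 := by
    rw [hR_eq]
    exact mul_pos hK (div_pos (logisticDensity.pos _) (logisticDensity.pos _))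
  obtain ⟨x1, x3, hx1, hx3, hRx1, hRx3⟩ := exists_lt_lt_of_tendsto_cocompact_zero hlim hR0
  exact ⟨x1, 0, x3, hx1, hx3, hRx1, hRx3⟩
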